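/- Let G be a simple graph, x a leaf (vertex of degree one) of G, and y the unique neighbour of x. Then for every integer t ≥ 2, the colon ideal I(G)^t : (xy) equals I(G)^{t-1}. -/

import Mathlib

/-! Powers of the monomial ideal `I(G)` are monomial ideals: `I(G)^t` is spanned by the monomials
whose exponents are sums of `t` edge exponents, and membership is tested monomial by monomial.
If `m · xy` is divisible by a product of `t + 1` edges, one edge can be dropped leaving a divisor
of `m`: the edge `xy` itself if it occurs; otherwise no edge meets the leaf `x`, so the factor `x`
is wasted, and an edge through `y` (failing that, any edge) can go. -/

open MvPolynomial

noncomputable section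

/-- The homogeneous maximal ideal of the polynomial ring. -/
def maxIdeal (k : Type) [Field k] (σ : Type) : Ideal (MvPolynomial σ k) :=
  Ideal.span (Set.range MvPolynomial.X)

/-- The depth of a module over the polynomial ring, with respect to the homogeneous
maximal ideal: the supremum of lengths of regular sequences contained in it. -/
def moduleDepth (k : Type) [Field k] (σ : Type) (M : Type)
    [AddCommGroup M] [Module (MvPolynomial σ k) M] : ℕ :=
  sSup {d : ℕ | ∃ rs : List (MvPolynomial σ k), rs.length = d ∧
    (∀ r ∈ rs, r ∈ maxIdeal k σ) ∧ RingTheory.Sequence.IsRegular M rs}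

/-- depth of S/I. -/
def quotDepth (k : Type) [Field k] (σ : Type) (I : Ideal (MvPolynomial σ k)) : ℕ :=
  moduleDepth k σ (MvPolynomial σ k ⧸ I)

/-- The edge ideal of a simple graph. -/
def edgeIdeal (k : Type) [Field k] (σ : Type) (G : SimpleGraph σ) : Ideal (MvPolynomial σ k) :=
  Ideal.span {m | ∃ i j, G.Adj i j ∧ m = MvPolynomial.X i * MvPolynomial.X j}

/-- The variable `x_{i+1}` (`1`-based `i+1`, `0`-based `i`) of `k[x_1,…,x_n]`,
or `1` if out of range. -/
def Xv (k : Type) [Field k] (n : ℕ) (i : ℕ) : MvPolynomial (Fin n) k :=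
  if h : i < n then MvPolynomial.X ⟨i, h⟩ else 1

open Pointwise

theorem Set.mem_nsmul_iff_exists_multiset {α : Type*} [AddCommMonoid α] {A : Set α} {t : ℕ}
    {s : α} : s ∈ t • A ↔ ∃ M : Multiset α, Multiset.card M = t ∧ (∀ e ∈ M, e ∈ A) ∧ M.sum = s := by
  induction t generalizing s with
  | zero => simp [eq_comm]
  | succ t ih =>
    rw [succ_nsmul, Set.mem_add]
    constructor
    · rintro ⟨r, hr, e, he, rfl⟩
      obtain ⟨M, rfl, hM, rfl⟩ := ih.mp hr
      refine ⟨e ::ₘ M, by simp, ?_, by simp [add_comm]⟩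
      simpa [he] using hM
    · rintro ⟨M, hcard, hM, rfl⟩
      obtain ⟨e, N, rfl, rfl⟩ := Multiset.card_eq_succ_iff.mp hcard
      simp only [Multiset.mem_cons, forall_eq_or_imp] at hM
      exact ⟨N.sum, ih.mpr ⟨N, rfl, hM.2, rfl⟩, e, hM.1, by simp [add_comm]⟩

theorem Multiset.sum_erase_le_of_sum_le_add {α : Type*} [AddCommMonoid α] [PartialOrder α]
    [IsOrderedCancelAddMonoid α] [DecidableEq α] {M : Multiset α} {e d : α} (he : e ∈ M)
    (hle : M.sum ≤ d + e) : (M.erase e).sum ≤ d := by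
  rw [← Multiset.sum_erase he, add_comm] at hle
  exact le_of_add_le_add_right hle

namespace Finsupp

variable {σ : Type*}

theorem multiset_sum_apply_eq_zero {M : Multiset (σ →₀ ℕ)} {v : σ} (h : ∀ e ∈ M, e v = 0) :
    M.sum v = 0 := by
  rw [← applyAddHom_apply, map_multiset_sum]
  exact Multiset.sum_eq_zero (by simpa using h)

theorem le_of_le_add_single_of_apply_eq_zero {s d : σ →₀ ℕ} {v : σ} {n : ℕ}
    (hle : s ≤ d + single v n) (hv : s v = 0) : s ≤ d := by
  intro w
  by_cases hw : w = v
  · simp [hw, hv]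
  · simpa [single_apply, Ne.symm hw] using hle w

variable {x y : σ} {d : σ →₀ ℕ}

theorem exists_mem_sum_le_add {M : Multiset (σ →₀ ℕ)} (hM : M ≠ 0)
    (hx : ∀ e ∈ M, e x ≠ 0 → e = single x 1 + single y 1)
    (hle : M.sum ≤ d + (single x 1 + single y 1)) : ∃ e ∈ M, M.sum ≤ d + e := by
  by_cases hxy : single x 1 + single y 1 ∈ M
  · exact ⟨_, hxy, hle⟩
  have hMx : M.sum x = 0 :=
    multiset_sum_apply_eq_zero fun e he => by_contra fun h => hxy (hx e he h ▸ he)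
  have hle' : M.sum ≤ d + single y 1 :=
    le_of_le_add_single_of_apply_eq_zero (by rwa [add_comm (single x 1), ← add_assoc] at hle) hMx
  by_cases hy : ∃ e ∈ M, e y ≠ 0
  · obtain ⟨e, he, hey⟩ := hy
    have hye : single y 1 ≤ e := single_le_iff.mpr (Nat.one_le_iff_ne_zero.mpr hey)
    exact ⟨e, he, hle'.trans (add_le_add_right hye d)⟩
  · push Not at hy
    obtain ⟨e, he⟩ := Multiset.exists_mem_of_ne_zero hM
    exact ⟨e, he,
      (le_of_le_add_single_of_apply_eq_zero hle' (multiset_sum_apply_eq_zero hy)).trans le_self_add⟩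

theorem exists_mem_nsmul_le {A : Set (σ →₀ ℕ)}
    (hA : ∀ e ∈ A, e x ≠ 0 → e = single x 1 + single y 1) {t : ℕ} {s : σ →₀ ℕ}
    (hs : s ∈ (t + 1) • A) (hle : s ≤ d + (single x 1 + single y 1)) :
    ∃ s' ∈ t • A, s' ≤ d := by
  classical
  obtain ⟨M, hcard, hMA, rfl⟩ := Set.mem_nsmul_iff_exists_multiset.mp hs
  obtain ⟨e, he, hle'⟩ := exists_mem_sum_le_add (Multiset.card_pos.mp (by omega))
    (fun e he => hA e (hMA e he)) hle
  refine ⟨(M.erase e).sum, Set.mem_nsmul_iff_exists_multiset.mpr ⟨M.erase e, ?_, ?_, rfl⟩,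
    Multiset.sum_erase_le_of_sum_le_add he hle'⟩
  · simp [Multiset.card_erase_of_mem he, hcard]
  · exact fun f hf => hMA f (Multiset.mem_of_mem_erase hf)

end Finsupp

namespace MvPolynomial

variable {σ R : Type*} [CommSemiring R]

theorem image_monomial_one_mul (A B : Set (σ →₀ ℕ)) :
    (fun s => monomial s (1 : R)) '' A * (fun s => monomial s (1 : R)) '' B =
      (fun s => monomial s (1 : R)) '' (A + B) := by
  simp only [← Set.image2_mul, ← Set.image2_add, Set.image2_image_left, Set.image2_image_right,
    Set.image_image2, monomial_mul, one_mul]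

theorem span_monomial_one_image_pow (A : Set (σ →₀ ℕ)) (t : ℕ) :
    Ideal.span ((fun s => monomial s (1 : R)) '' A) ^ t =
      Ideal.span ((fun s => monomial s (1 : R)) '' (t • A)) := by
  induction t with
  | zero => simp
  | succ t ih => rw [pow_succ, ih, Ideal.span_mul_span', image_monomial_one_mul, succ_nsmul]

end MvPolynomial

def SimpleGraph.edgeExponents {σ : Type*} (G : SimpleGraph σ) : Set (σ →₀ ℕ) :=
  {e | ∃ i j, G.Adj i j ∧ e = Finsupp.single i 1 + Finsupp.single j 1}

theorem SimpleGraph.eq_of_mem_edgeExponents_of_apply_ne_zero {σ : Type*} {G : SimpleGraph σ}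
    {x y : σ} (hleaf : G.neighborSet x = {y}) {e : σ →₀ ℕ} (he : e ∈ G.edgeExponents)
    (hx : e x ≠ 0) : e = Finsupp.single x 1 + Finsupp.single y 1 := by
  obtain ⟨i, j, hij, rfl⟩ := he
  have hnbr : ∀ z, G.Adj x z → z = y := fun z hz => by
    simpa [hleaf] using (G.mem_neighborSet x z).mpr hz
  by_cases hi : i = x
  · subst hi; rw [hnbr j hij]
  · have hj : j = x := by
      by_contra hj
      simp [Ne.symm hi, Ne.symm hj] at hx
    subst hj; rw [hnbr i hij.symm, add_comm]

theorem edgeIdeal_eq_span_monomial (k : Type) [Field k] {σ : Type} (G : SimpleGraph σ) :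
    edgeIdeal k σ G = Ideal.span ((fun s => monomial s (1 : k)) '' G.edgeExponents) := by
  unfold edgeIdeal SimpleGraph.edgeExponents
  congr 1
  ext m
  simp [X, monomial_mul, eq_comm]

theorem edgeIdeal_pow_eq_span_monomial (k : Type) [Field k] {σ : Type} (G : SimpleGraph σ)
    (t : ℕ) :
    edgeIdeal k σ G ^ t = Ideal.span ((fun s => monomial s (1 : k)) '' (t • G.edgeExponents)) := by
  rw [edgeIdeal_eq_span_monomial, span_monomial_one_image_pow]

theorem colon_edgeIdeal_pow_succ_of_neighborSet_eq_singleton (k : Type) [Field k] {σ : Type}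
    {G : SimpleGraph σ} {x y : σ} (hleaf : G.neighborSet x = {y}) (t : ℕ) :
    (edgeIdeal k σ G ^ (t + 1)).colon
        ((Ideal.span {X x * X y} : Ideal (MvPolynomial σ k)) : Set (MvPolynomial σ k)) =
      edgeIdeal k σ G ^ t := by
  ext f
  rw [Ideal.mem_colon_span_singleton]
  constructor
  · rw [edgeIdeal_pow_eq_span_monomial, edgeIdeal_pow_eq_span_monomial,
      mem_ideal_span_monomial_image, mem_ideal_span_monomial_image]
    intro hf m hm
    have hm' : m + Finsupp.single x 1 + Finsupp.single y 1 ∈ (f * (X x * X y)).support := by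
      rwa [mem_support_iff, ← mul_assoc, coeff_mul_X, coeff_mul_X, ← mem_support_iff]
    obtain ⟨s, hs, hle⟩ := hf _ hm'
    exact Finsupp.exists_mem_nsmul_le
      (fun e he => SimpleGraph.eq_of_mem_edgeExponents_of_apply_ne_zero hleaf he) hs
      (by rwa [add_assoc] at hle)
  · intro hf
    have hxy : G.Adj x y := by simp [← SimpleGraph.mem_neighborSet, hleaf]
    exact pow_succ (edgeIdeal k σ G) t ▸ Ideal.mul_mem_mul hf (Ideal.subset_span ⟨x, y, hxy, rfl⟩)

theorem colon_leaf_edge_general (k σ : Type) [Field k] (G : SimpleGraph σ) (x y : σ)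
    (hleaf : G.neighborSet x = {y}) (t : ℕ) :
    (edgeIdeal k σ G ^ t).colon
        ((Ideal.span {MvPolynomial.X x * MvPolynomial.X y} : Ideal (MvPolynomial σ k)) :
          Set (MvPolynomial σ k)) =
      edgeIdeal k σ G ^ (t - 1) := by
  cases t with
  | zero => simp
  | succ t => exact colon_edgeIdeal_pow_succ_of_neighborSet_eq_singleton k hleaf t

theorem colon_leaf_edge (k σ : Type) [Field k] (G : SimpleGraph σ) (x y : σ)
    (hleaf : G.neighborSet x = {y}) (t : ℕ) (ht : 2 ≤ t) :
    (edgeIdeal k σ G ^ t).colon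
        ((Ideal.span {MvPolynomial.X x * MvPolynomial.X y} : Ideal (MvPolynomial σ k)) :
          Set (MvPolynomial σ k)) =
      edgeIdeal k σ G ^ (t - 1) :=
  colon_leaf_edge_general k σ G x y hleaf t
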